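/- Let A be a nonempty finite alphabet, let F ⊆ A* be a recurrent set, and let X be a rational F-maximal bifix code. Then d_F(X) is finite and every subgroup of M(X*) contained in J_F(X) is isomorphic to a subgroup of the symmetric group on d_F(X) elements. In particular, if Z is a rational maximal bifix code of A* (so that d(Z) is finite), then every subgroup of M(Z*) contained in the minimum ideal J(Z) is isomorphic to a subgroup of the symmetric group on d(Z) elements. -/

import Mathlib

/-! Common definitions: words over a finite alphabet `A` are terms of `List A`,
concatenation being the monoid operation of the free monoid `A*`. -/

namespace PaperDefs

variable {A : Type*}

/-- `w` belongs to the Kleene star `X*` of `X`: it is a (possibly empty)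
concatenation of elements of `X`. -/
def InStar (X : Set (List A)) (w : List A) : Prop :=
  ∃ l : List (List A), (∀ u ∈ l, u ∈ X) ∧ l.flatten = w

/-- The language `X*`. -/
def star (X : Set (List A)) : Set (List A) := {w | InStar X w}

/-- A prefix code: a nonempty set of nonempty words, none of which is a proper
prefix of another. -/
def IsPrefixCode (X : Set (List A)) : Prop :=
  X.Nonempty ∧ (∀ w ∈ X, w ≠ []) ∧ ∀ u ∈ X, ∀ v ∈ X, u <+: v → u = v

/-- A suffix code. -/
def IsSuffixCode (X : Set (List A)) : Prop :=
  X.Nonempty ∧ (∀ w ∈ X, w ≠ []) ∧ ∀ u ∈ X, ∀ v ∈ X, u <:+ v → u = v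

/-- A bifix code. -/
def IsBifixCode (X : Set (List A)) : Prop := IsPrefixCode X ∧ IsSuffixCode X

/-- A factorial set contains all factors of its elements. -/
def Factorial (F : Set (List A)) : Prop := ∀ w ∈ F, ∀ u, u <:+: w → u ∈ F

/-- A recurrent set. -/
def Recurrent (F : Set (List A)) : Prop :=
  Factorial F ∧ F.Nonempty ∧ F ≠ {[]} ∧ ∀ u ∈ F, ∀ v ∈ F, ∃ w, u ++ w ++ v ∈ F

/-- A uniformly recurrent set. -/
def UniformlyRecurrent (F : Set (List A)) : Prop :=
  Recurrent F ∧ ∀ u ∈ F, ∃ n : ℕ, ∀ w ∈ F, n ≤ w.length → u <:+: w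

/-- A parse of `w` with respect to `X` : a triple `(v, x, u)` with `w = v x u`,
`v` has no suffix in `X`, `x ∈ X*`, and `u` has no prefix in `X`. -/
def IsParse (X : Set (List A)) (w : List A) (p : List A × List A × List A) : Prop :=
  p.1 ++ p.2.1 ++ p.2.2 = w ∧ (¬ ∃ s ∈ X, s <:+ p.1) ∧ InStar X p.2.1 ∧
    ¬ ∃ s ∈ X, s <+: p.2.2

/-- `δ_X(w)`, the number of parses of `w` with respect to `X`. -/
noncomputable def delta (X : Set (List A)) (w : List A) : ℕ :=
  {p | IsParse X w p}.ncard

/-- The `F`-degree `d_F(X)` of `X`, as an extended natural number. -/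
noncomputable def Fdeg (X F : Set (List A)) : ℕ∞ :=
  ⨆ w ∈ F, (delta X w : ℕ∞)

/-- The degree `d(X)` of `X`. -/
noncomputable def deg (X : Set (List A)) : ℕ∞ := Fdeg X Set.univ

/-- An `F`-maximal bifix code. -/
def IsFMaximalBifixCode (F X : Set (List A)) : Prop :=
  IsBifixCode X ∧ X ⊆ F ∧ ∀ Y : Set (List A), IsBifixCode Y → Y ⊆ F → X ⊆ Y → Y = X

/-- An `F`-maximal prefix code. -/
def IsFMaximalPrefixCode (F X : Set (List A)) : Prop :=
  IsPrefixCode X ∧ X ⊆ F ∧ ∀ Y : Set (List A), IsPrefixCode Y → Y ⊆ F → X ⊆ Y → Y = X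

/-- `X` is `F`-thin: some word of `F` is not a factor of any element of `X`. -/
def FThin (F X : Set (List A)) : Prop := ∃ w ∈ F, ∀ x ∈ X, ¬ w <:+: x

/-- A rational (regular) language. -/
def IsRational (L : Set (List A)) : Prop :=
  ∃ (σ : Type) (_ : Fintype σ) (M : DFA A σ), ∀ w : List A, w ∈ M.accepts ↔ w ∈ L

/-- The syntactic congruence of the language `L`. -/
def SynEquiv (L : Set (List A)) (u v : List A) : Prop :=
  ∀ x y : List A, x ++ u ++ y ∈ L ↔ x ++ v ++ y ∈ L

/-- `η : A* → M` is (a realization of) the syntactic homomorphism onto the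
syntactic monoid of `L`. -/
structure IsSyntacticHom (L : Set (List A)) {M : Type*} [Monoid M] (η : List A → M) : Prop where
  map_nil : η [] = 1
  map_append : ∀ u v : List A, η (u ++ v) = η u * η v
  surj : Function.Surjective η
  syn : ∀ u v : List A, η u = η v ↔ SynEquiv L u v

section Green

variable {M : Type*} [Monoid M]

/-- The `J`-order: `MuM ⊆ MvM`. -/
def JLe (u v : M) : Prop := ∃ x y, u = x * v * y

/-- Green's relation `J`. -/
def JEquiv (u v : M) : Prop := JLe u v ∧ JLe v u

/-- Green's relation `R`. -/
def REquiv (u v : M) : Prop := (∃ x, v = u * x) ∧ (∃ x, u = v * x)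

/-- Green's relation `L`. -/
def LEquiv (u v : M) : Prop := (∃ x, v = x * u) ∧ (∃ x, u = x * v)

/-- Green's relation `H`. -/
def HEquiv (u v : M) : Prop := REquiv u v ∧ LEquiv u v

/-- Green's relation `D`. -/
def DEquiv (u v : M) : Prop := ∃ s, REquiv u s ∧ LEquiv s v

/-- The `H`-class of an element. -/
def HClass (e : M) : Set M := {m | HEquiv m e}

/-- Membership in the minimum ideal (minimum `J`-class) of `M`. -/
def InMinIdeal (m : M) : Prop := ∀ n : M, JLe m n

/-- `S` is a subgroup of the monoid `M`: a subsemigroup which is a group. -/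
def IsSubgroupIn (S : Set M) : Prop :=
  S.Nonempty ∧ (∀ x ∈ S, ∀ y ∈ S, x * y ∈ S) ∧
    ∃ e ∈ S, (∀ x ∈ S, e * x = x ∧ x * e = x) ∧ ∀ x ∈ S, ∃ y ∈ S, x * y = e ∧ y * x = e

/-- The subsets `S ⊆ M` and `T ⊆ N` (each closed under multiplication, e.g.
maximal subgroups) are isomorphic as groups: there is a multiplicative
bijection from `S` onto `T`. -/
def GroupIsoOn {N : Type*} [Monoid N] (S : Set M) (T : Set N) : Prop :=
  ∃ φ : M → N, Set.BijOn φ S T ∧ ∀ x ∈ S, ∀ y ∈ S, φ (x * y) = φ x * φ y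

end Green

/-- `m` belongs to `J_F(X)`, the minimum `J`-class of the syntactic monoid of
`X*` meeting the image of `F` under the syntactic homomorphism `η`. -/
def InFMinJ {M : Type*} [Monoid M] (η : List A → M) (F : Set (List A)) (m : M) : Prop :=
  (∃ w ∈ F, JEquiv m (η w)) ∧ ∀ w ∈ F, JLe m (η w)

/-- A group code: a prefix code `Z` defined by a transitive permutation
representation of `A*` on a finite set, `Z*` being the stabilizer of a point. -/
def IsGroupCode (Z : Set (List A)) : Prop :=
  IsPrefixCode Z ∧
  ∃ (Q : Type) (_ : Fintype Q) (q₀ : Q) (α : List A → Equiv.Perm Q),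
    α [] = 1 ∧ (∀ u v : List A, α (u ++ v) = α u * α v) ∧
    (∀ q q' : Q, ∃ w : List A, α w q = q') ∧
    (∀ w : List A, InStar Z w ↔ α w q₀ = q₀) ∧
    Z = {w : List A | α w q₀ = q₀ ∧ w ≠ [] ∧
          ¬ ∃ u v : List A, u ≠ [] ∧ v ≠ [] ∧ α u q₀ = q₀ ∧ α v q₀ = q₀ ∧ w = u ++ v}

/-- Vertices of the extension graph of `w` in `F`: the disjoint union of
`L(w)` and `R(w)`. -/
def ExtVertex (F : Set (List A)) (w : List A) : Sum A A → Prop :=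
  fun x => Sum.elim (fun a => a :: w ∈ F) (fun b => w ++ [b] ∈ F) x

/-- The edge relation of the extension graph of `w` in `F`. -/
def ExtRel (F : Set (List A)) (w : List A) : Sum A A → Sum A A → Prop :=
  fun x y =>
    match x, y with
    | Sum.inl a, Sum.inr b => a :: (w ++ [b]) ∈ F
    | _, _ => False

/-- The extension graph `G(w)` of `w` in `F`. -/
def extGraph (F : Set (List A)) (w : List A) :
    SimpleGraph {x : Sum A A // ExtVertex F w x} :=
  SimpleGraph.fromRel fun x y => ExtRel F w x.1 y.1

/-- `F` is connected: every extension graph of a word of `F` is connected. -/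
def ConnectedSet (F : Set (List A)) : Prop :=
  ∀ w ∈ F, (extGraph F w).Connected

/-- `F` is a tree set: every extension graph of a word of `F` is a tree. -/
def TreeSet (F : Set (List A)) : Prop :=
  ∀ w ∈ F, (extGraph F w).IsTree

/-- The alphabet of `F` is the whole of `A`. -/
def AlphabetIs (F : Set (List A)) : Prop := ∀ a : A, [a] ∈ F

/-- The left quotient `u⁻¹L`, i.e. the state reached from the initial state of
the minimal automaton of `L` by reading `u`. -/
def leftQuot (L : Set (List A)) (u : List A) : Set (List A) := {w | u ++ w ∈ L}

/-- The set of states of the minimal automaton of `L`: the nonempty left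
quotients of `L`. -/
def MinStates (L : Set (List A)) : Set (Set (List A)) :=
  {q | q.Nonempty ∧ ∃ u : List A, q = leftQuot L u}

/-- The (partial) transition of the minimal automaton: `q · v`; it is defined
when the resulting set is nonempty. -/
def stepW (q : Set (List A)) (v : List A) : Set (List A) := {w | v ++ w ∈ q}

/-- The rank of the word `v` in the minimal automaton of `L`: the number of
distinct states `q · v` with `q` a state such that `q · v` is defined. -/
noncomputable def wordRank (L : Set (List A)) (v : List A) : ℕ :=
  ((fun q => stepW q v) '' {q ∈ MinStates L | (stepW q v).Nonempty}).ncard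

/-- The set of first return words of `F` to `u`. -/
def ReturnWords (F : Set (List A)) (u : List A) : Set (List A) :=
  {v | v ≠ [] ∧ u ++ v ∈ F ∧ u <:+ u ++ v ∧
    ¬ ∃ x y : List A, x ≠ [] ∧ y ≠ [] ∧ u ++ v = x ++ u ++ y}

/-- A code: every word has at most one factorization into elements of `X`. -/
def IsCode (X : Set (List A)) : Prop :=
  ∀ l m : List (List A), (∀ u ∈ l, u ∈ X) → (∀ u ∈ m, u ∈ X) →
    l.flatten = m.flatten → l = m

/-- The set `I = Q_X · K` of images of states of the minimal automaton of `L`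
under (partial) transitions by words whose syntactic image lies in `K`. -/
def ImageSet (L : Set (List A)) {M : Type*} [Monoid M] (η : List A → M) (K : Set M) :
    Set (Set (List A)) :=
  {p | ∃ q ∈ MinStates L, ∃ v : List A, η v ∈ K ∧ (stepW q v).Nonempty ∧ p = stepW q v}

/-- A witness for "a finite monoid `M` together with a monoid homomorphism
`A* → M`". -/
structure FiniteMonoidHomWitness (A : Type*) where
  M : Type
  [fin : Fintype M]
  [mon : Monoid M]
  φ : List A → M
  map_nil : φ [] = 1
  map_append : ∀ u v : List A, φ (u ++ v) = φ u * φ v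

end PaperDefs

/-!
For a bifix code `X`, a parse of `w` is determined by its left part (a prefix of `w` with no suffix
in `X`) and also by its right part (a suffix with no prefix in `X`), so `δ_X(w)` counts either.
`F`-maximality forces every word of `F` to be completable into `X*` on at least one side, which
injects the parses of `w ∈ F` into the columns or rows of the finite syntactic monoid `M`; hence
`δ_X` is bounded on `F`. Comparing with a word `V` of maximal `δ_X` shows that every word of `F` is
completable on both sides. Then the right parts of `W ∈ F` have distinct nonempty rows, all of the
form `row (n · η W)`, so `δ_X(W) ≤ rank (η W)`, with equality when `δ_X(W)` is maximal, since every
such row is then already realised by a right part of `W`. Rank is constant on `J`-classes, so it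
equals `d = d_F(X)` on `J_F(X)`. Finally a subgroup with identity `e` in `J_F(X)` permutes the `d`
nonempty rows of the elements `n e` by right translation, faithfully because `η(X*)` is
disjunctive in `M`.
-/

namespace PaperDefs

variable {A : Type*} {X F : Set (List A)}

section Words

theorem nil_mem_star (X : Set (List A)) : ([] : List A) ∈ star X := ⟨[], by simp, rfl⟩

theorem mem_star_of_mem {x : List A} (hx : x ∈ X) : x ∈ star X := ⟨[x], by simpa, by simp⟩

theorem append_mem_star {u v : List A} (hu : u ∈ star X) (hv : v ∈ star X) :
    u ++ v ∈ star X := by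
  obtain ⟨l, hl, rfl⟩ := hu
  obtain ⟨m, hm, rfl⟩ := hv
  exact ⟨l ++ m, fun x hx => (List.mem_append.1 hx).elim (hl x) (hm x), by simp⟩

theorem exists_eq_append_of_mem_star {w : List A} (hw : w ∈ star X) (hne : w ≠ []) :
    ∃ x ∈ X, ∃ r ∈ star X, w = x ++ r := by
  obtain ⟨_ | ⟨x, l⟩, hl, rfl⟩ := hw
  · simp at hne
  · exact ⟨x, hl x (by simp), l.flatten, ⟨l, fun y hy => hl y (by simp [hy]), rfl⟩, by simp⟩

theorem mem_star_reverse_preimage {w : List A} :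
    w ∈ star (List.reverse ⁻¹' X) ↔ w.reverse ∈ star X := by
  have key : ∀ {Y : Set (List A)} {w : List A},
      w ∈ star (List.reverse ⁻¹' Y) → w.reverse ∈ star Y := by
    rintro Y _ ⟨l, hl, rfl⟩
    refine ⟨(l.map List.reverse).reverse, fun b hb => ?_, by simp [List.reverse_flatten]⟩
    obtain ⟨c, hc, rfl⟩ := List.mem_map.1 (List.mem_reverse.1 hb)
    exact hl c hc
  refine ⟨key, fun h => ?_⟩
  have hXX : List.reverse ⁻¹' (List.reverse ⁻¹' X) = X := by ext; simp
  have := key (Y := List.reverse ⁻¹' X) (hXX.symm ▸ h)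
  rwa [List.reverse_reverse] at this

def HasPrefixIn (X : Set (List A)) (w : List A) : Prop := ∃ x ∈ X, x <+: w

def HasSuffixIn (X : Set (List A)) (w : List A) : Prop := ∃ x ∈ X, x <:+ w

theorem hasSuffixIn_iff_hasPrefixIn_reverse {w : List A} :
    HasSuffixIn X w ↔ HasPrefixIn (List.reverse ⁻¹' X) w.reverse :=
  ⟨fun ⟨x, hx, hxw⟩ => ⟨x.reverse, by simpa, List.reverse_prefix.2 hxw⟩,
    fun ⟨x, hx, hxw⟩ => ⟨x.reverse, hx, by simpa using List.reverse_suffix.2 hxw⟩⟩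

theorem not_hasPrefixIn_nil (hX : ∀ x ∈ X, x ≠ []) : ¬ HasPrefixIn X [] :=
  fun ⟨x, hx, hxn⟩ => hX x hx (List.prefix_nil.1 hxn)

theorem hasPrefixIn_of_mem_star {w : List A} (hw : w ∈ star X) (hne : w ≠ []) :
    HasPrefixIn X w := by
  obtain ⟨x, hx, r, -, rfl⟩ := exists_eq_append_of_mem_star hw hne
  exact ⟨x, hx, List.prefix_append x r⟩

theorem hasSuffixIn_of_mem_star {w : List A} (hw : w ∈ star X) (hne : w ≠ []) :
    HasSuffixIn X w := by
  rw [hasSuffixIn_iff_hasPrefixIn_reverse]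
  exact hasPrefixIn_of_mem_star (mem_star_reverse_preimage.2 (by simpa using hw)) (by simpa)

theorem exists_mem_star_append_not_hasPrefixIn (hX : ∀ x ∈ X, x ≠ []) (w : List A) :
    ∃ x ∈ star X, ∃ u, ¬ HasPrefixIn X u ∧ w = x ++ u := by
  induction h : w.length using Nat.strong_induction_on generalizing w with
  | _ n ih =>
    by_cases hw : HasPrefixIn X w
    · obtain ⟨s, hs, t, rfl⟩ := hw
      have hlt : t.length < n := by simp [← h, List.length_pos_iff.2 (hX s hs)]
      obtain ⟨x, hx, u, hu, rfl⟩ := ih _ hlt t rfl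
      exact ⟨s ++ x, append_mem_star (mem_star_of_mem hs) hx, u, hu, by simp⟩
    · exact ⟨[], nil_mem_star X, w, hw, rfl⟩

theorem exists_not_hasSuffixIn_append_mem_star (hX : ∀ x ∈ X, x ≠ []) (w : List A) :
    ∃ v, ¬ HasSuffixIn X v ∧ ∃ x ∈ star X, w = v ++ x := by
  obtain ⟨x, hx, u, hu, h⟩ := exists_mem_star_append_not_hasPrefixIn
    (X := List.reverse ⁻¹' X) (fun x hx => by simpa using hX _ hx) w.reverse
  refine ⟨u.reverse, by rwa [hasSuffixIn_iff_hasPrefixIn_reverse, List.reverse_reverse],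
    x.reverse, mem_star_reverse_preimage.1 hx, ?_⟩
  rw [← List.reverse_reverse w, h, List.reverse_append]

theorem exists_prefix_of_append_mem_star {u z : List A} (hu : ¬ HasPrefixIn X u) (hne : u ≠ [])
    (h : u ++ z ∈ star X) : ∃ x ∈ X, u <+: x := by
  obtain ⟨x, hx, r, -, hxr⟩ := exists_eq_append_of_mem_star h (by simp [hne])
  refine ⟨x, hx, ?_⟩
  rcases List.prefix_or_prefix_of_prefix (List.prefix_append u z) (hxr ▸ List.prefix_append x r)
    with h | h
  · exact h
  · exact absurd ⟨x, hx, h⟩ hu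

end Words

section Codes

theorem IsPrefixCode.eq_of_append_eq (hX : IsPrefixCode X) {x x' u u' : List A}
    (hx : x ∈ star X) (hx' : x' ∈ star X) (hu : ¬ HasPrefixIn X u) (hu' : ¬ HasPrefixIn X u')
    (h : x ++ u = x' ++ u') : x = x' := by
  obtain ⟨l, hl, rfl⟩ := hx
  induction l generalizing x' with
  | nil =>
    rcases eq_or_ne x' [] with rfl | hne
    · rfl
    obtain ⟨b, hb, r, -, rfl⟩ := exists_eq_append_of_mem_star hx' hne
    exact absurd ⟨b, hb, r ++ u', by simp_all⟩ hu
  | cons b l ih =>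
    have hb : b ∈ X := hl b (by simp)
    rcases eq_or_ne x' [] with rfl | hne
    · exact absurd ⟨b, hb, l.flatten ++ u, by simp_all⟩ hu'
    obtain ⟨b', hb', r, hr, rfl⟩ := exists_eq_append_of_mem_star hx' hne
    simp only [List.flatten_cons, List.append_assoc] at h ⊢
    have hbb' : b = b' := by
      rcases List.prefix_or_prefix_of_prefix (List.prefix_append b _)
        (h ▸ List.prefix_append b' _) with h' | h'
      exacts [hX.2.2 b hb b' hb' h', (hX.2.2 b' hb' b hb h').symm]
    subst hbb'
    rw [ih hr (fun y hy => hl y (by simp [hy])) (List.append_cancel_left h)]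

theorem IsPrefixCode.mem_star_of_append_mem_star (hX : IsPrefixCode X) {a b : List A}
    (ha : a ∈ star X) (hab : a ++ b ∈ star X) : b ∈ star X := by
  obtain ⟨x, hx, u, hu, rfl⟩ := exists_mem_star_append_not_hasPrefixIn hX.2.1 b
  have h := hX.eq_of_append_eq (append_mem_star ha hx) hab hu (not_hasPrefixIn_nil hX.2.1)
    (by simp)
  simp only [List.append_cancel_left_eq, List.self_eq_append_right] at h
  simpa [h] using hx

theorem IsSuffixCode.isPrefixCode_reverse (hX : IsSuffixCode X) :
    IsPrefixCode (List.reverse ⁻¹' X) := by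
  obtain ⟨⟨x, hx⟩, hne, hcode⟩ := hX
  refine ⟨⟨x.reverse, by simpa⟩, fun w hw => by simpa using hne _ hw, fun u hu v hv huv => ?_⟩
  exact List.reverse_injective (hcode _ hu _ hv (List.reverse_suffix.2 huv))

theorem IsSuffixCode.eq_of_append_eq (hX : IsSuffixCode X) {v v' x x' : List A}
    (hx : x ∈ star X) (hx' : x' ∈ star X) (hv : ¬ HasSuffixIn X v) (hv' : ¬ HasSuffixIn X v')
    (h : v ++ x = v' ++ x') : x = x' := by
  rw [hasSuffixIn_iff_hasPrefixIn_reverse] at hv hv'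
  refine List.reverse_injective (hX.isPrefixCode_reverse.eq_of_append_eq ?_ ?_ hv hv' ?_)
  · exact mem_star_reverse_preimage.2 (by simpa using hx)
  · exact mem_star_reverse_preimage.2 (by simpa using hx')
  · simpa using congrArg List.reverse h

theorem IsSuffixCode.mem_star_of_append_mem_star (hX : IsSuffixCode X) {a b : List A}
    (hb : b ∈ star X) (hab : a ++ b ∈ star X) : a ∈ star X := by
  have := hX.isPrefixCode_reverse.mem_star_of_append_mem_star (a := b.reverse) (b := a.reverse)
    (mem_star_reverse_preimage.2 (by simpa using hb))
    (mem_star_reverse_preimage.2 (by simpa using hab))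
  simpa using mem_star_reverse_preimage.1 this

theorem IsPrefixCode.eq_of_prefix_of_append_mem_star (hX : IsPrefixCode X) {y a b : List A}
    (hb : ¬ HasSuffixIn X b) (ha : y ++ a ∈ star X) (hyb : y ++ b ∈ star X) (hab : a <+: b) :
    a = b := by
  obtain ⟨s, rfl⟩ := hab
  rcases eq_or_ne s [] with rfl | hs
  · simp
  have hs' : s ∈ star X := hX.mem_star_of_append_mem_star ha (by simpa using hyb)
  obtain ⟨x, hx, hxs⟩ := hasSuffixIn_of_mem_star hs' hs
  exact absurd ⟨x, hx, hxs.trans (List.suffix_append a s)⟩ hb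

theorem IsSuffixCode.eq_of_suffix_of_append_mem_star (hX : IsSuffixCode X) {z a b : List A}
    (hb : ¬ HasPrefixIn X b) (ha : a ++ z ∈ star X) (hbz : b ++ z ∈ star X) (hab : a <:+ b) :
    a = b := by
  obtain ⟨r, rfl⟩ := hab
  rcases eq_or_ne r [] with rfl | hr
  · simp
  have hr' : r ∈ star X := hX.mem_star_of_append_mem_star ha (by simpa using hbz)
  obtain ⟨x, hx, hxr⟩ := hasPrefixIn_of_mem_star hr' hr
  exact absurd ⟨x, hx, hxr.trans (List.prefix_append r a)⟩ hb

theorem IsPrefixCode.insert (hX : IsPrefixCode X) {c : List A} (hc : c ≠ [])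
    (hcX : ¬ HasPrefixIn X c) (hXc : ∀ x ∈ X, ¬ c <+: x) : IsPrefixCode (insert c X) := by
  refine ⟨⟨c, Set.mem_insert c X⟩, ?_, ?_⟩
  · rintro w (rfl | hw)
    exacts [hc, hX.2.1 w hw]
  · rintro u (rfl | hu) v (rfl | hv) huv
    · rfl
    · exact absurd huv (hXc v hv)
    · exact absurd ⟨u, hu, huv⟩ hcX
    · exact hX.2.2 u hu v hv huv

theorem IsSuffixCode.insert (hX : IsSuffixCode X) {c : List A} (hc : c ≠ [])
    (hcX : ¬ HasSuffixIn X c) (hXc : ∀ x ∈ X, ¬ c <:+ x) : IsSuffixCode (insert c X) := by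
  refine ⟨⟨c, Set.mem_insert c X⟩, ?_, ?_⟩
  · rintro w (rfl | hw)
    exacts [hc, hX.2.1 w hw]
  · rintro u (rfl | hu) v (rfl | hv) huv
    · rfl
    · exact absurd huv (hXc v hv)
    · exact absurd ⟨u, hu, huv⟩ hcX
    · exact hX.2.2 u hu v hv huv

end Codes

section Parses

def leftParts (X : Set (List A)) (w : List A) : Set (List A) :=
  {v | v <+: w ∧ ¬ HasSuffixIn X v}

def rightParts (X : Set (List A)) (w : List A) : Set (List A) :=
  {u | u <:+ w ∧ ¬ HasPrefixIn X u}

theorem leftParts_finite (X : Set (List A)) (w : List A) : (leftParts X w).Finite :=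
  w.inits.finite_toSet.subset fun _ hv => List.mem_inits _ _ |>.2 hv.1

theorem rightParts_finite (X : Set (List A)) (w : List A) : (rightParts X w).Finite :=
  w.tails.finite_toSet.subset fun _ hu => List.mem_tails _ _ |>.2 hu.1

theorem leftParts_subset_of_prefix {w w' : List A} (h : w <+: w') :
    leftParts X w ⊆ leftParts X w' :=
  fun _ hv => ⟨hv.1.trans h, hv.2⟩

theorem rightParts_subset_of_suffix {w w' : List A} (h : w <:+ w') :
    rightParts X w ⊆ rightParts X w' :=
  fun _ hu => ⟨hu.1.trans h, hu.2⟩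

/-- For a prefix code, a parse is determined by its first component. -/
theorem delta_eq_ncard_leftParts (hX : IsPrefixCode X) (w : List A) :
    delta X w = (leftParts X w).ncard := by
  have hinj : Set.InjOn Prod.fst {p | IsParse X w p} := by
    rintro ⟨v, x, u⟩ ⟨h, -, hx, hu⟩ ⟨v', x', u'⟩ ⟨h', -, hx', hu'⟩ (rfl : v = v')
    have hxu : x ++ u = x' ++ u' := by simpa using h.trans h'.symm
    obtain rfl := hX.eq_of_append_eq hx hx' hu hu' hxu
    simp_all
  have himage : Prod.fst '' {p | IsParse X w p} = leftParts X w := by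
    ext v
    constructor
    · rintro ⟨⟨v, x, u⟩, ⟨h, hv, -⟩, rfl⟩
      exact ⟨⟨x ++ u, by simpa using h⟩, hv⟩
    rintro ⟨⟨t, rfl⟩, hv⟩
    obtain ⟨x, hx, u, hu, rfl⟩ := exists_mem_star_append_not_hasPrefixIn hX.2.1 t
    exact ⟨⟨v, x, u⟩, ⟨by simp, hv, hx, hu⟩, rfl⟩
  rw [delta, ← himage, hinj.ncard_image]

/-- For a suffix code, a parse is determined by its last component. -/
theorem delta_eq_ncard_rightParts (hX : IsSuffixCode X) (w : List A) :
    delta X w = (rightParts X w).ncard := by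
  have hinj : Set.InjOn (fun p => p.2.2) {p | IsParse X w p} := by
    rintro ⟨v, x, u⟩ ⟨h, hv, hx, -⟩ ⟨v', x', u'⟩ ⟨h', hv', hx', -⟩ (rfl : u = u')
    have hvx : v ++ x = v' ++ x' := List.append_cancel_right (h.trans h'.symm)
    obtain rfl := hX.eq_of_append_eq hx hx' hv hv' hvx
    simp_all
  have himage : (fun p => p.2.2) '' {p | IsParse X w p} = rightParts X w := by
    ext u
    constructor
    · rintro ⟨⟨v, x, u⟩, ⟨h, -, -, hu⟩, rfl⟩
      exact ⟨⟨v ++ x, h⟩, hu⟩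
    rintro ⟨⟨t, rfl⟩, hu⟩
    obtain ⟨v, hv, x, hx, rfl⟩ := exists_not_hasSuffixIn_append_mem_star hX.2.1 t
    exact ⟨⟨v, x, u⟩, ⟨by simp, hv, hx, hu⟩, rfl⟩
  rw [delta, ← himage, hinj.ncard_image]

theorem delta_le_of_infix (hX : IsBifixCode X) {w w' : List A} (h : w <:+: w') :
    delta X w ≤ delta X w' := by
  obtain ⟨a, b, rfl⟩ := h
  calc delta X w ≤ delta X (w ++ b) := by
        simp only [delta_eq_ncard_leftParts hX.1]
        exact Set.ncard_le_ncard (leftParts_subset_of_prefix (List.prefix_append w b))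
          (leftParts_finite X _)
    _ ≤ delta X (a ++ w ++ b) := by
        simp only [delta_eq_ncard_rightParts hX.2, List.append_assoc]
        exact Set.ncard_le_ncard (rightParts_subset_of_suffix (List.suffix_append a _))
          (rightParts_finite X _)

theorem IsPrefixCode.eq_of_mem_leftParts (hX : IsPrefixCode X) {w v v' y : List A}
    (hv : v ∈ leftParts X w) (hv' : v' ∈ leftParts X w) (hy : y ++ v ∈ star X)
    (hy' : y ++ v' ∈ star X) : v = v' := by
  rcases List.prefix_or_prefix_of_prefix hv.1 hv'.1 with h | h
  · exact hX.eq_of_prefix_of_append_mem_star hv'.2 hy hy' h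
  · exact (hX.eq_of_prefix_of_append_mem_star hv.2 hy' hy h).symm

theorem IsSuffixCode.eq_of_mem_rightParts (hX : IsSuffixCode X) {w u u' z : List A}
    (hu : u ∈ rightParts X w) (hu' : u' ∈ rightParts X w) (hz : u ++ z ∈ star X)
    (hz' : u' ++ z ∈ star X) : u = u' := by
  rcases List.suffix_or_suffix_of_suffix hu.1 hu'.1 with h | h
  · exact hX.eq_of_suffix_of_append_mem_star hu'.2 hz hz' h
  · exact (hX.eq_of_suffix_of_append_mem_star hu.2 hz' hz h).symm

end Parses

section Completability

def LeftCompletable (X : Set (List A)) (w : List A) : Prop := ∃ y, y ++ w ∈ star X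

def RightCompletable (X : Set (List A)) (w : List A) : Prop := ∃ z, w ++ z ∈ star X

theorem Recurrent.exists_append_mem (hF : Recurrent F) {u v : List A} (hu : u ∈ F)
    (hv : v ∈ F) : ∃ w, u ++ w ++ v ∈ F :=
  hF.2.2.2 u hu v hv

theorem exists_eq_append_not_hasSuffixIn (hX : ∀ x ∈ X, x ≠ []) {u : List A}
    (hu : ¬ LeftCompletable X u) (t : List A) :
    ∃ u₁ y, u = u₁ ++ y ∧ y ∈ star X ∧ ¬ HasSuffixIn X (t ++ u₁) := by
  obtain ⟨c, hc, y, hy, htu⟩ := exists_not_hasSuffixIn_append_mem_star hX (t ++ u)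
  obtain ⟨u₁, rfl⟩ : y <:+ u := by
    refine (List.suffix_or_suffix_of_suffix ⟨c, htu.symm⟩ (List.suffix_append t u)).resolve_right ?_
    exact fun ⟨ρ, hρ⟩ => hu ⟨ρ, hρ ▸ hy⟩
  obtain rfl : c = t ++ u₁ := List.append_cancel_right (by simpa using htu.symm)
  exact ⟨u₁, y, rfl, hy, hc⟩

theorem exists_eq_append_not_hasPrefixIn (hX : ∀ x ∈ X, x ≠ []) {u : List A}
    (hu : ¬ RightCompletable X u) (t : List A) :
    ∃ z u₂, u = z ++ u₂ ∧ z ∈ star X ∧ ¬ HasPrefixIn X (u₂ ++ t) := by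
  obtain ⟨z, hz, c, hc, hut⟩ := exists_mem_star_append_not_hasPrefixIn hX (u ++ t)
  obtain ⟨u₂, rfl⟩ : z <+: u := by
    refine (List.prefix_or_prefix_of_prefix ⟨c, hut.symm⟩ (List.prefix_append u t)).resolve_right ?_
    exact fun ⟨ρ, hρ⟩ => hu ⟨ρ, hρ ▸ hz⟩
  obtain rfl : c = u₂ ++ t := List.append_cancel_left (hut.symm.trans (List.append_assoc _ _ _))
  exact ⟨z, u₂, rfl, hz, hc⟩

/-- Otherwise `insert c X` would be a larger bifix code in `F`. -/
theorem IsFMaximalBifixCode.comparable (hX : IsFMaximalBifixCode F X) {c : List A}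
    (hcF : c ∈ F) (hc : c ≠ []) :
    HasPrefixIn X c ∨ HasSuffixIn X c ∨ (∃ x ∈ X, c <+: x) ∨ ∃ x ∈ X, c <:+ x := by
  by_contra! h
  obtain ⟨hp, hs, hp', hs'⟩ := h
  have hcX : insert c X = X :=
    hX.2.2 _ ⟨hX.1.1.insert hc hp hp', hX.1.2.insert hc hs hs'⟩ (Set.insert_subset hcF hX.2.1)
      (Set.subset_insert c X)
  exact hp ⟨c, hcX ▸ Set.mem_insert c X, List.prefix_refl c⟩

/-- If `u` could be completed on neither side, stripping from `u w u ∈ F` a longest suffix and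
then a longest prefix in `X*` leaves a word incomparable with all of `X`. -/
theorem IsFMaximalBifixCode.leftCompletable_or_rightCompletable (hF : Recurrent F)
    (hX : IsFMaximalBifixCode F X) {u : List A} (hu : u ∈ F) :
    LeftCompletable X u ∨ RightCompletable X u := by
  by_contra! h
  obtain ⟨hL, hR⟩ := h
  obtain ⟨w, huwu⟩ := hF.exists_append_mem hu hu
  obtain ⟨u₁, y, hu₁, hy, hsuf⟩ := exists_eq_append_not_hasSuffixIn hX.1.2.2.1 hL (u ++ w)
  obtain ⟨z, u₂, hu₂, hz, hpre⟩ := exists_eq_append_not_hasPrefixIn hX.1.1.2.1 hR (w ++ u₁)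
  have hc : u₂ ++ w ++ u₁ ≠ [] := by
    intro hc
    obtain rfl : u₂ = [] := by simp_all
    exact hR ⟨[], by simpa [hu₂] using hz⟩
  have hcF : u₂ ++ w ++ u₁ ∈ F :=
    hF.1 _ huwu _ ⟨z, y, by
      rw [show z ++ (u₂ ++ w ++ u₁) ++ y = z ++ u₂ ++ w ++ (u₁ ++ y) by simp, ← hu₁, ← hu₂]⟩
  rcases hX.comparable hcF hc with hp | ⟨x, hx, hxc⟩ | ⟨x, hx, t, rfl⟩ | ⟨x, hx, ρ, rfl⟩
  · exact hpre (by simpa using hp)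
  · exact hsuf ⟨x, hx, hxc.trans ⟨z, by simp [hu₂]⟩⟩
  · exact hR ⟨w ++ u₁ ++ t, by simpa [hu₂] using append_mem_star hz (mem_star_of_mem hx)⟩
  · exact hL ⟨ρ ++ u₂ ++ w, by simpa [hu₁] using append_mem_star (mem_star_of_mem hx) hy⟩

theorem IsFMaximalBifixCode.forall_leftCompletable_or_forall_rightCompletable
    (hF : Recurrent F) (hX : IsFMaximalBifixCode F X) :
    (∀ w ∈ F, LeftCompletable X w) ∨ ∀ w ∈ F, RightCompletable X w := by
  by_contra! h
  obtain ⟨⟨v, hv, hvL⟩, ⟨u, hu, huR⟩⟩ := h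
  obtain ⟨τ, hτ⟩ := hF.exists_append_mem hu hv
  rcases hX.leftCompletable_or_rightCompletable hF hτ with ⟨y, hy⟩ | ⟨z, hz⟩
  · exact hvL ⟨y ++ u ++ τ, by simpa using hy⟩
  · exact huR ⟨τ ++ v ++ z, by simpa using hz⟩

theorem leftCompletable_of_delta_append_le (hX : IsPrefixCode X) {W w : List A}
    (h : delta X (W ++ w) ≤ delta X W) : LeftCompletable X w := by
  have hparts : leftParts X W = leftParts X (W ++ w) := by
    refine Set.eq_of_subset_of_ncard_le (leftParts_subset_of_prefix (List.prefix_append W w)) ?_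
      (leftParts_finite X _)
    rwa [← delta_eq_ncard_leftParts hX, ← delta_eq_ncard_leftParts hX]
  obtain ⟨v, hv, x, hx, hWw⟩ := exists_not_hasSuffixIn_append_mem_star hX.2.1 (W ++ w)
  obtain ⟨⟨t, rfl⟩, -⟩ : v ∈ leftParts X W := hparts ▸ ⟨⟨x, hWw.symm⟩, hv⟩
  exact ⟨t, List.append_cancel_left (hWw.symm.trans (List.append_assoc _ _ _)) ▸ hx⟩

theorem rightCompletable_of_delta_append_le (hX : IsSuffixCode X) {W w : List A}
    (h : delta X (w ++ W) ≤ delta X W) : RightCompletable X w := by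
  have hparts : rightParts X W = rightParts X (w ++ W) := by
    refine Set.eq_of_subset_of_ncard_le (rightParts_subset_of_suffix (List.suffix_append w W))
      ?_ (rightParts_finite X _)
    rwa [← delta_eq_ncard_rightParts hX, ← delta_eq_ncard_rightParts hX]
  obtain ⟨x, hx, u, hu, hwW⟩ := exists_mem_star_append_not_hasPrefixIn hX.2.1 (w ++ W)
  obtain ⟨⟨t, rfl⟩, -⟩ : u ∈ rightParts X W := hparts ▸ ⟨⟨x, hwW.symm⟩, hu⟩
  exact ⟨t, (List.append_cancel_right ((List.append_assoc _ _ _).trans hwW)).symm ▸ hx⟩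

theorem forall_leftCompletable_of_forall_delta_le (hF : Recurrent F) (hX : IsPrefixCode X)
    {V : List A} (hV : V ∈ F) (hmax : ∀ w ∈ F, delta X w ≤ delta X V) :
    ∀ w ∈ F, LeftCompletable X w := by
  intro w hw
  obtain ⟨τ, hτ⟩ := hF.exists_append_mem hV hw
  obtain ⟨y, hy⟩ := leftCompletable_of_delta_append_le hX (w := τ ++ w)
    (by simpa using hmax _ hτ)
  exact ⟨y ++ τ, by simpa using hy⟩

theorem forall_rightCompletable_of_forall_delta_le (hF : Recurrent F) (hX : IsSuffixCode X)
    {V : List A} (hV : V ∈ F) (hmax : ∀ w ∈ F, delta X w ≤ delta X V) :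
    ∀ w ∈ F, RightCompletable X w := by
  intro w hw
  obtain ⟨τ, hτ⟩ := hF.exists_append_mem hw hV
  obtain ⟨z, hz⟩ := rightCompletable_of_delta_append_le hX (w := w ++ τ) (hmax _ hτ)
  exact ⟨τ ++ z, by simpa using hz⟩

end Completability

section Monoid

variable {M : Type*} [Monoid M]

theorem JLe.refl (m : M) : JLe m m := ⟨1, 1, by simp⟩

theorem JLe.trans {a b c : M} (hab : JLe a b) (hbc : JLe b c) : JLe a c := by
  obtain ⟨x, y, rfl⟩ := hab
  obtain ⟨x', y', rfl⟩ := hbc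
  exact ⟨x * x', y' * y, by simp [mul_assoc]⟩

def IsDisjunctive (P : Set M) : Prop :=
  ∀ x y : M, (∀ n k, n * x * k ∈ P ↔ n * y * k ∈ P) → x = y

def row (P : Set M) (m : M) : Set M := {k | m * k ∈ P}

def nonemptyRows (P : Set M) (m : M) : Set (Set M) :=
  {R | R.Nonempty ∧ ∃ n, row P (n * m) = R}

/-- When `P` is the image of a language in its syntactic monoid, the rows `row P (n * m)` are
the states of its minimal automaton reached through `m`, so this is the rank of `m` there. -/
noncomputable def rank (P : Set M) (m : M) : ℕ := (nonemptyRows P m).ncard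

theorem row_mul (P : Set M) (m g : M) : row P (m * g) = {k | g * k ∈ row P m} := by
  ext k
  simp [row, mul_assoc]

theorem rank_le_of_JLe [Finite M] (P : Set M) {m m' : M} (h : JLe m m') :
    rank P m ≤ rank P m' := by
  obtain ⟨x, y, rfl⟩ := h
  refine (Set.ncard_le_ncard (t := (fun R => {k | y * k ∈ R}) '' nonemptyRows P m') ?_).trans
    (Set.ncard_image_le (Set.toFinite _))
  rintro _ ⟨⟨k, hk⟩, n, rfl⟩
  have hrow : row P (n * (x * m' * y)) = {k | y * k ∈ row P (n * x * m')} := by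
    rw [show n * (x * m' * y) = n * x * m' * y by simp only [mul_assoc], row_mul]
  rw [hrow] at hk ⊢
  exact ⟨row P (n * x * m'), ⟨⟨_, hk⟩, n * x, rfl⟩, rfl⟩

theorem rank_eq_of_JEquiv [Finite M] (P : Set M) {m m' : M} (h : JEquiv m m') :
    rank P m = rank P m' :=
  le_antisymm (rank_le_of_JLe P h.1) (rank_le_of_JLe P h.2)

theorem exists_injOn_perm_of_rightAction {α : Type*} {S : Set M} {e : M} {T : Set α} [Finite T]
    (ρ : M → α → α) (hmul : ∀ x ∈ S, ∀ y ∈ S, x * y ∈ S)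
    (hinv : ∀ x ∈ S, ∃ y ∈ S, x * y = e ∧ y * x = e) (hmaps : ∀ g ∈ S, Set.MapsTo (ρ g) T T)
    (hρ : ∀ x ∈ S, ∀ y ∈ S, ∀ t ∈ T, ρ (x * y) t = ρ y (ρ x t)) (hρe : ∀ t ∈ T, ρ e t = t)
    (hfaith : ∀ x ∈ S, ∀ y ∈ S, Set.EqOn (ρ x) (ρ y) T → x = y) :
    ∃ φ : M → Equiv.Perm (Fin (Nat.card T)),
      Set.InjOn φ S ∧ ∀ x ∈ S, ∀ y ∈ S, φ (x * y) = φ x * φ y := by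
  classical
  have hbij : ∀ g ∈ S, Set.BijOn (ρ g) T T := fun g hg => by
    obtain ⟨g', hg', hgg', hg'g⟩ := hinv g hg
    refine Set.InvOn.bijOn ⟨fun t ht => ?_, fun t ht => ?_⟩ (hmaps g hg) (hmaps g' hg')
    · rw [← hρ g hg g' hg' t ht, hgg', hρe t ht]
    · rw [← hρ g' hg' g hg t ht, hg'g, hρe t ht]
  let σ : ∀ g ∈ S, Equiv.Perm T := fun g hg => (hbij g hg).equiv
  have hσ : ∀ x (hx : x ∈ S) y (hy : y ∈ S), σ (x * y) (hmul x hx y hy) = σ y hy * σ x hx :=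
    fun x hx y hy => Equiv.ext fun t => Subtype.ext (hρ x hx y hy t t.2)
  -- inverting turns the right action into a homomorphism
  let φ : M → Equiv.Perm (Fin (Nat.card T)) := fun g =>
    if hg : g ∈ S then (Finite.equivFin T).permCongr (σ g hg)⁻¹ else 1
  refine ⟨φ, fun x hx y hy hxy => hfaith x hx y hy fun t ht => ?_, fun x hx y hy => ?_⟩
  · simp only [φ, dif_pos hx, dif_pos hy, EmbeddingLike.apply_eq_iff_eq, inv_inj] at hxy
    exact congrArg Subtype.val (Equiv.congr_fun hxy ⟨t, ht⟩)
  · simp only [φ, dif_pos hx, dif_pos hy, dif_pos (hmul x hx y hy)]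
    rw [hσ x hx y hy, mul_inv_rev, Equiv.permCongr_mul]

/-- A subgroup permutes the nonempty rows of `n * e`, `e` its identity, by right translation. -/
theorem IsSubgroupIn.exists_injOn_perm_rank [Finite M] {P : Set M} (hP : IsDisjunctive P)
    {S : Set M} (hS : IsSubgroupIn S) {m : M} (hm : m ∈ S) :
    ∃ φ : M → Equiv.Perm (Fin (rank P m)),
      Set.InjOn φ S ∧ ∀ x ∈ S, ∀ y ∈ S, φ (x * y) = φ x * φ y := by
  obtain ⟨-, hmul, e, he, hid, hinv⟩ := hS
  obtain ⟨m', -, hmm', -⟩ := hinv m hm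
  have hrank : rank P m = Nat.card (nonemptyRows P e) :=
    rank_eq_of_JEquiv P ⟨⟨1, m, by simp [(hid m hm).1]⟩, ⟨1, m', by simp [hmm']⟩⟩
  have hrow : ∀ g ∈ S, ∀ n, row P (n * g) = {k | g * k ∈ row P (n * e)} := fun g hg n => by
    rw [← row_mul, mul_assoc, (hid g hg).1]
  rw [hrank]
  refine exists_injOn_perm_of_rightAction (fun g R => {k | g * k ∈ R}) hmul hinv ?_ ?_ ?_ ?_
  · rintro g hg _ ⟨⟨k, hk⟩, n, rfl⟩
    obtain ⟨g', hg', hgg', -⟩ := hinv g hg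
    refine ⟨⟨g' * k, ?_⟩, n * g, by rw [mul_assoc, (hid g hg).2, hrow g hg]⟩
    change n * e * (g * (g' * k)) ∈ P
    rwa [← mul_assoc g, hgg', ← mul_assoc, mul_assoc n, (hid e he).1]
  · intro x _ y _ R _
    ext k
    simp [mul_assoc]
  · rintro _ ⟨-, n, rfl⟩
    exact (hrow e he n).symm
  · intro x hx y hy hxy
    refine hP x y fun n k => ?_
    change k ∈ row P (n * x) ↔ k ∈ row P (n * y)
    rw [hrow x hx, hrow y hy]
    rcases (row P (n * e)).eq_empty_or_nonempty with h | h
    · simp [h]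
    · exact Set.ext_iff.1 (hxy ⟨h, n, rfl⟩) k

end Monoid

section Syntactic

variable {M : Type*} [Monoid M] {η : List A → M}

theorem IsSyntacticHom.mem_image_iff {L : Set (List A)} (hη : IsSyntacticHom L η)
    {w : List A} : η w ∈ η '' L ↔ w ∈ L :=
  ⟨fun ⟨w', hw', he⟩ => by simpa using ((hη.syn w' w).1 he [] []).1 (by simpa using hw'),
    fun h => ⟨w, h, rfl⟩⟩

theorem IsSyntacticHom.mem_row_iff {L : Set (List A)} (hη : IsSyntacticHom L η)
    (u z : List A) : η z ∈ row (η '' L) (η u) ↔ u ++ z ∈ L := by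
  change η u * η z ∈ η '' L ↔ _
  rw [← hη.map_append, hη.mem_image_iff]

theorem IsSyntacticHom.isDisjunctive {L : Set (List A)} (hη : IsSyntacticHom L η) :
    IsDisjunctive (η '' L) := by
  intro x y h
  obtain ⟨u, rfl⟩ := hη.surj x
  obtain ⟨v, rfl⟩ := hη.surj y
  refine (hη.syn u v).2 fun p q => ?_
  simpa only [← hη.map_append, hη.mem_image_iff] using h (η p) (η q)

theorem IsPrefixCode.row_mul_eq (hX : IsPrefixCode X) (hη : IsSyntacticHom (star X) η)
    {y : List A} (hy : y ∈ star X) (m : M) :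
    row (η '' star X) (η y * m) = row (η '' star X) m := by
  obtain ⟨w, rfl⟩ := hη.surj m
  ext k
  obtain ⟨z, rfl⟩ := hη.surj k
  rw [← hη.map_append, hη.mem_row_iff, hη.mem_row_iff, List.append_assoc]
  exact ⟨hX.mem_star_of_append_mem_star hy, append_mem_star hy⟩

/-- Factor `y V = x u` greedily with `x ∈ X*`; then `u` is a prefix of a word of `X`, hence in
`F`, and has the same row as `y V`. -/
theorem exists_rightParts_row_eq (hF : Factorial F) (hXF : X ⊆ F) (hX : IsPrefixCode X)
    (hη : IsSyntacticHom (star X) η) {V : List A} (hV : V ∈ F) {R : Set M}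
    (hR : R ∈ nonemptyRows (η '' star X) (η V)) :
    ∃ V' ∈ F, V <:+ V' ∧ ∃ u ∈ rightParts X V', row (η '' star X) (η u) = R := by
  obtain ⟨⟨k, hk⟩, n, rfl⟩ := hR
  obtain ⟨y, rfl⟩ := hη.surj n
  obtain ⟨z, rfl⟩ := hη.surj k
  rw [← hη.map_append, hη.mem_row_iff] at hk
  obtain ⟨x, hx, u, hu, hyV⟩ := exists_mem_star_append_not_hasPrefixIn hX.2.1 (y ++ V)
  have hrow : row (η '' star X) (η u) = row (η '' star X) (η y * η V) := by
    rw [← hη.map_append, hyV, hη.map_append, hX.row_mul_eq hη hx]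
  have huF : u ∈ F := by
    rcases eq_or_ne u [] with rfl | hne
    · exact hF V hV [] List.nil_infix
    obtain ⟨b, hb, hub⟩ := exists_prefix_of_append_mem_star hu hne
      (hX.mem_star_of_append_mem_star hx (by rwa [← List.append_assoc, ← hyV]))
    exact hF b (hXF hb) u hub.isInfix
  rcases List.suffix_or_suffix_of_suffix (List.suffix_append y V) ⟨x, hyV.symm⟩ with h | h
  · exact ⟨u, huF, h, u, ⟨List.suffix_refl u, hu⟩, hrow⟩
  · exact ⟨V, hV, List.suffix_refl V, u, ⟨h, hu⟩, hrow⟩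

variable [Finite M]

theorem delta_le_card_of_leftCompletable (hX : IsPrefixCode X) (hη : IsSyntacticHom (star X) η)
    {w : List A} (h : ∀ v ∈ leftParts X w, LeftCompletable X v) :
    delta X w ≤ Nat.card (Set M) := by
  rw [delta_eq_ncard_leftParts hX]
  have hinj : Set.InjOn (fun v => {k | k * η v ∈ η '' star X}) (leftParts X w) := by
    intro v hv v' hv' hvv'
    obtain ⟨y, hy⟩ := h v hv
    have hmem : ∀ v, η y ∈ {k | k * η v ∈ η '' star X} ↔ y ++ v ∈ star X := fun v => by
      rw [← hη.mem_image_iff, hη.map_append]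
      rfl
    have hy' : y ++ v' ∈ star X := by
      have hvv' : {k | k * η v ∈ η '' star X} = {k | k * η v' ∈ η '' star X} := hvv'
      rw [← hmem, ← hvv', hmem]
      exact hy
    exact hX.eq_of_mem_leftParts hv hv' hy hy'
  exact hinj.ncard_image ▸ Set.ncard_le_card _

theorem delta_le_card_of_rightCompletable (hX : IsSuffixCode X)
    (hη : IsSyntacticHom (star X) η) {w : List A}
    (h : ∀ u ∈ rightParts X w, RightCompletable X u) : delta X w ≤ Nat.card (Set M) := by
  rw [delta_eq_ncard_rightParts hX]
  have hinj : Set.InjOn (fun u => row (η '' star X) (η u)) (rightParts X w) := by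
    intro u hu u' hu' huu'
    obtain ⟨z, hz⟩ := h u hu
    have hz' := (hη.mem_row_iff u z).2 hz
    rw [show row _ (η u) = _ from huu', hη.mem_row_iff] at hz'
    exact hX.eq_of_mem_rightParts hu hu' hz hz'
  exact hinj.ncard_image ▸ Set.ncard_le_card _

theorem IsFMaximalBifixCode.exists_forall_delta_le (hF : Recurrent F)
    (hX : IsFMaximalBifixCode F X) (hη : IsSyntacticHom (star X) η) :
    ∃ V ∈ F, ∀ w ∈ F, delta X w ≤ delta X V := by
  have hbdd : ∀ w ∈ F, delta X w ≤ Nat.card (Set M) := by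
    intro w hw
    rcases hX.forall_leftCompletable_or_forall_rightCompletable hF with hL | hR
    · exact delta_le_card_of_leftCompletable hX.1.1 hη fun v hv =>
        hL v (hF.1 w hw v hv.1.isInfix)
    · exact delta_le_card_of_rightCompletable hX.1.2 hη fun u hu =>
        hR u (hF.1 w hw u hu.1.isInfix)
  obtain ⟨_, ⟨V, hV, rfl⟩, hmax⟩ := Set.exists_max_image (delta X '' F) id
    ((Set.finite_Iic (Nat.card (Set M))).subset (by rintro _ ⟨w, hw, rfl⟩; exact hbdd w hw))
    (hF.2.1.image _)
  exact ⟨V, hV, fun w hw => hmax _ ⟨w, hw, rfl⟩⟩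

theorem delta_le_rank (hF : Factorial F) (hX : IsBifixCode X) (hη : IsSyntacticHom (star X) η)
    (hL : ∀ w ∈ F, LeftCompletable X w) (hR : ∀ w ∈ F, RightCompletable X w) {W : List A}
    (hW : W ∈ F) : delta X W ≤ rank (η '' star X) (η W) := by
  rw [delta_eq_ncard_rightParts hX.2]
  refine Set.ncard_le_ncard_of_injOn (fun u => row (η '' star X) (η u)) ?_ ?_
  · rintro u ⟨⟨p, rfl⟩, -⟩
    obtain ⟨y, hy⟩ := hL p (hF _ hW p (List.infix_append [] p u))
    obtain ⟨z, hz⟩ := hR u (hF _ hW u (List.suffix_append p u).isInfix)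
    refine ⟨⟨η z, (hη.mem_row_iff u z).2 hz⟩, η y, ?_⟩
    rw [hη.map_append, ← mul_assoc, ← hη.map_append, hX.1.row_mul_eq hη hy]
  · intro u hu u' hu' huu'
    obtain ⟨z, hz⟩ := hR u (hF _ hW u hu.1.isInfix)
    have hz' := (hη.mem_row_iff u z).2 hz
    rw [show row _ (η u) = _ from huu', hη.mem_row_iff] at hz'
    exact hX.2.eq_of_mem_rightParts hu hu' hz hz'

theorem rank_le_delta (hF : Factorial F) (hXF : X ⊆ F) (hX : IsBifixCode X)
    (hη : IsSyntacticHom (star X) η) {V : List A} (hV : V ∈ F)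
    (hmax : ∀ w ∈ F, delta X w ≤ delta X V) : rank (η '' star X) (η V) ≤ delta X V := by
  rw [delta_eq_ncard_rightParts hX.2]
  refine (Set.ncard_le_ncard ?_ (Set.toFinite _)).trans
    (Set.ncard_image_le (f := fun u => row (η '' star X) (η u)) (rightParts_finite X V))
  intro R hR
  obtain ⟨V', hV', hVV', u, hu, rfl⟩ := exists_rightParts_row_eq hF hXF hX.1 hη hV hR
  have hparts : rightParts X V = rightParts X V' := by
    refine Set.eq_of_subset_of_ncard_le (rightParts_subset_of_suffix hVV') ?_
      (rightParts_finite X V')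
    rw [← delta_eq_ncard_rightParts hX.2, ← delta_eq_ncard_rightParts hX.2]
    exact hmax V' hV'
  exact ⟨u, hparts ▸ hu, rfl⟩

end Syntactic

theorem Fdeg_eq_of_forall_delta_le {V : List A} (hV : V ∈ F)
    (hmax : ∀ w ∈ F, delta X w ≤ delta X V) : Fdeg X F = delta X V :=
  le_antisymm (iSup₂_le fun w hw => by exact_mod_cast hmax w hw)
    (le_iSup₂ (f := fun w (_ : w ∈ F) => (delta X w : ℕ∞)) V hV)

theorem IsFMaximalBifixCode.exists_Fdeg_eq_and_injOn_perm {M : Type*} [Monoid M] [Finite M]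
    {η : List A → M} (hF : Recurrent F) (hX : IsFMaximalBifixCode F X)
    (hη : IsSyntacticHom (star X) η) :
    ∃ d : ℕ, Fdeg X F = d ∧
      ∀ S : Set M, IsSubgroupIn S → (∀ m ∈ S, InFMinJ η F m) →
        ∃ φ : M → Equiv.Perm (Fin d),
          Set.InjOn φ S ∧ ∀ x ∈ S, ∀ y ∈ S, φ (x * y) = φ x * φ y := by
  obtain ⟨V, hV, hmax⟩ := hX.exists_forall_delta_le hF hη
  have hL := forall_leftCompletable_of_forall_delta_le hF hX.1.1 hV hmax
  have hR := forall_rightCompletable_of_forall_delta_le hF hX.1.2 hV hmax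
  refine ⟨delta X V, Fdeg_eq_of_forall_delta_le hV hmax, fun S hS hSJ => ?_⟩
  obtain ⟨m, hm⟩ := hS.1
  obtain ⟨⟨w, hw, hmw⟩, hmin⟩ := hSJ m hm
  obtain ⟨τ, hτ⟩ := hF.exists_append_mem hV hw
  have hδ : delta X (V ++ τ ++ w) = delta X V :=
    le_antisymm (hmax _ hτ) (delta_le_of_infix hX.1 ⟨[], τ ++ w, by simp⟩)
  have hJ : JEquiv m (η (V ++ τ ++ w)) :=
    ⟨hmin _ hτ, JLe.trans ⟨η (V ++ τ), 1, by simp [hη.map_append, mul_assoc]⟩ hmw.2⟩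
  have hrank : rank (η '' star X) m = delta X V := by
    rw [rank_eq_of_JEquiv _ hJ, ← hδ]
    exact le_antisymm (rank_le_delta hF.1 hX.2.1 hX.1 hη hτ (hδ ▸ hmax))
      (delta_le_rank hF.1 hX.1 hη hL hR hτ)
  exact hrank ▸ hS.exists_injOn_perm_rank hη.isDisjunctive hm

theorem recurrent_univ [Nonempty A] : Recurrent (Set.univ : Set (List A)) := by
  refine ⟨fun _ _ _ _ => trivial, Set.univ_nonempty, fun h => ?_, fun _ _ _ _ => ⟨[], trivial⟩⟩
  obtain ⟨a⟩ := ‹Nonempty A›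
  have ha : [a] ∈ ({[]} : Set (List A)) := h ▸ Set.mem_univ [a]
  simp at ha

theorem InMinIdeal.inFMinJ_univ {M : Type*} [Monoid M] {η : List A → M}
    (hη : Function.Surjective η) {m : M} (h : InMinIdeal m) : InFMinJ η Set.univ m := by
  obtain ⟨w, rfl⟩ := hη m
  exact ⟨⟨w, trivial, JLe.refl _, JLe.refl _⟩, fun w _ => h (η w)⟩

end PaperDefs

open PaperDefs in
theorem stmt_5_general {A : Type} [Nonempty A]
    (F X : Set (List A)) (hF : Recurrent F)
    (hX : IsFMaximalBifixCode F X)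
    {MX : Type} [Monoid MX] [Finite MX] {ηX : List A → MX}
    (hηX : IsSyntacticHom (star X) ηX) :
    (∃ d : ℕ, Fdeg X F = (d : ℕ∞) ∧
      ∀ S : Set MX, IsSubgroupIn S → (∀ m ∈ S, InFMinJ ηX F m) →
        ∃ φ : MX → Equiv.Perm (Fin d),
          Set.InjOn φ S ∧ ∀ x ∈ S, ∀ y ∈ S, φ (x * y) = φ x * φ y) ∧
    (∀ Z : Set (List A), IsFMaximalBifixCode Set.univ Z → IsRational Z →
      ∀ (MZ : Type) [Monoid MZ] [Finite MZ] (ηZ : List A → MZ),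
        IsSyntacticHom (star Z) ηZ →
        ∃ d : ℕ, deg Z = (d : ℕ∞) ∧
          ∀ S : Set MZ, IsSubgroupIn S → (∀ m ∈ S, InMinIdeal m) →
            ∃ φ : MZ → Equiv.Perm (Fin d),
              Set.InjOn φ S ∧ ∀ x ∈ S, ∀ y ∈ S, φ (x * y) = φ x * φ y) := by
  refine ⟨hX.exists_Fdeg_eq_and_injOn_perm hF hηX, fun Z hZ _ MZ _ _ ηZ hηZ => ?_⟩
  obtain ⟨d, hd, hgroups⟩ := hZ.exists_Fdeg_eq_and_injOn_perm recurrent_univ hηZ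
  exact ⟨d, hd, fun S hS hmin => hgroups S hS fun m hm => (hmin m hm).inFMinJ_univ hηZ.surj⟩

open PaperDefs in
theorem stmt_5 {A : Type} [Fintype A] [Nonempty A]
    (F X : Set (List A)) (hF : Recurrent F)
    (hX : IsFMaximalBifixCode F X) (hrat : IsRational X)
    {MX : Type} [Monoid MX] [Finite MX] {ηX : List A → MX}
    (hηX : IsSyntacticHom (star X) ηX) :
    (∃ d : ℕ, Fdeg X F = (d : ℕ∞) ∧
      ∀ S : Set MX, IsSubgroupIn S → (∀ m ∈ S, InFMinJ ηX F m) →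
        ∃ φ : MX → Equiv.Perm (Fin d),
          Set.InjOn φ S ∧ ∀ x ∈ S, ∀ y ∈ S, φ (x * y) = φ x * φ y) ∧
    (∀ Z : Set (List A), IsFMaximalBifixCode Set.univ Z → IsRational Z →
      ∀ (MZ : Type) [Monoid MZ] [Finite MZ] (ηZ : List A → MZ),
        IsSyntacticHom (star Z) ηZ →
        ∃ d : ℕ, deg Z = (d : ℕ∞) ∧
          ∀ S : Set MZ, IsSubgroupIn S → (∀ m ∈ S, InMinIdeal m) →
            ∃ φ : MZ → Equiv.Perm (Fin d),
              Set.InjOn φ S ∧ ∀ x ∈ S, ∀ y ∈ S, φ (x * y) = φ x * φ y) :=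
  stmt_5_general F X hF hX hηX
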